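/- arXiv:1401.8027 — 2 statements merged into one kernel-verified Lean document; each statement's English description precedes it below -/
import Mathlib

section
/- Let q be a complex number with |q| < 1. Then ∑_{n ∈ ℤ} q^{2n²−n} = ∏_{n=1}^∞ (1−q^{2n})²/(1−q^n) (Gauss's identity). -/
/-!
Cauchy's q-binomial theorem `∏_{j<m} (1 + x Q^j) = ∑_k [m, k]_Q Q^(k choose 2) x^k`, taken with
`Q = q⁴`, `m = 2N` and `x = q^(1-4N)`, gives the finite identity
`∏_{m<N} (1 + q^(4m+1)) (1 + q^(4m+3)) = ∑_{|j| ≤ N} [2N, N+j]_{q⁴} q^(2j²-j)`.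
For `‖q‖ < 1` the Gaussian binomials are bounded by `1 / (‖q‖⁴; ‖q‖⁴)_∞` and
`[2N, N+j]_{q⁴} → 1 / (q⁴; q⁴)_∞`, so by Tannery's theorem
`∑_j q^(2j²-j) = (q⁴; q⁴)_∞ ∏ (1 + q^(4n+1)) (1 + q^(4n+3))`. The product side is the same
after writing `(1 - q^(2n))² / (1 - q^n) = (1 - q^(2n)) (1 + q^n)` and splitting by parity.
-/

open scoped BigOperators

open Finset Filter Topology

section Algebra

variable {R : Type*} [CommRing R]

/-- The q-Pochhammer symbol `(Q; Q)_n`. -/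
def qPoch (Q : R) (n : ℕ) : R := ∏ i ∈ range n, (1 - Q ^ (i + 1))

def qBinom (Q : R) : ℕ → ℕ → R
  | _, 0 => 1
  | 0, _ + 1 => 0
  | m + 1, k + 1 => qBinom Q m k + Q ^ (k + 1) * qBinom Q m (k + 1)

variable (Q : R)

@[simp] lemma qPoch_zero : qPoch Q 0 = 1 := prod_range_zero _

lemma qPoch_succ (n : ℕ) : qPoch Q (n + 1) = qPoch Q n * (1 - Q ^ (n + 1)) :=
  prod_range_succ _ n

@[simp] lemma qBinom_zero_right (m : ℕ) : qBinom Q m 0 = 1 := by cases m <;> rfl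

@[simp] lemma qBinom_zero_succ (k : ℕ) : qBinom Q 0 (k + 1) = 0 := rfl

lemma qBinom_succ_succ (m k : ℕ) :
    qBinom Q (m + 1) (k + 1) = qBinom Q m k + Q ^ (k + 1) * qBinom Q m (k + 1) := rfl

lemma qBinom_eq_zero_of_lt : ∀ {m k : ℕ}, m < k → qBinom Q m k = 0
  | 0, _ + 1, _ => rfl
  | m + 1, k + 1, h => by
    rw [qBinom_succ_succ, qBinom_eq_zero_of_lt (by omega), qBinom_eq_zero_of_lt (by omega),
      mul_zero, add_zero]

lemma qBinom_mul_qPoch_mul_qPoch : ∀ {m k : ℕ}, k ≤ m →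
    qBinom Q m k * qPoch Q k * qPoch Q (m - k) = qPoch Q m
  | m, 0, _ => by simp
  | m + 1, k + 1, h => by
    have hk : qBinom Q m k * qPoch Q k * qPoch Q (m - k) = qPoch Q m :=
      qBinom_mul_qPoch_mul_qPoch (by omega)
    have hk1 : qBinom Q m (k + 1) * qPoch Q (k + 1) * qPoch Q (m - k) =
        qPoch Q m * (1 - Q ^ (m - k)) := by
      rcases (Nat.le_of_lt_succ h).eq_or_lt with rfl | hlt
      · simp [qBinom_eq_zero_of_lt Q (Nat.lt_succ_self k)]
      · rw [show m - k = m - (k + 1) + 1 by omega, qPoch_succ Q (m - (k + 1)), ← mul_assoc,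
          qBinom_mul_qPoch_mul_qPoch hlt]
    have hpow : Q ^ (k + 1) * Q ^ (m - k) = Q ^ (m + 1) := by
      rw [← pow_add]; congr 1; omega
    rw [qBinom_succ_succ, Nat.succ_sub_succ, qPoch_succ Q m]
    linear_combination (1 - Q ^ (k + 1)) * hk + Q ^ (k + 1) * hk1 - qPoch Q m * hpow +
      qBinom Q m k * qPoch Q (m - k) * qPoch_succ Q k

theorem prod_one_add_mul_pow_eq_sum_qBinom (m : ℕ) (x : R) :
    ∏ j ∈ range m, (1 + x * Q ^ j) =
      ∑ k ∈ range (m + 1), qBinom Q m k * Q ^ k.choose 2 * x ^ k := by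
  induction m generalizing x with
  | zero => simp
  | succ m ih =>
    have hchoose (k : ℕ) : (k + 1).choose 2 = k.choose 2 + k := by
      rw [Nat.choose_succ_succ, Nat.choose_one_right, add_comm]
    have hterm (k : ℕ) : qBinom Q (m + 1) (k + 1) * Q ^ (k + 1).choose 2 * x ^ (k + 1) =
        x * (qBinom Q m k * Q ^ k.choose 2 * (x * Q) ^ k) +
          qBinom Q m (k + 1) * Q ^ (k + 1).choose 2 * (x * Q) ^ (k + 1) := by
      rw [qBinom_succ_succ, hchoose]
      ring
    have hshift := sum_range_succ' (fun k => qBinom Q m k * Q ^ k.choose 2 * (x * Q) ^ k) (m + 1)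
    rw [sum_range_succ, qBinom_eq_zero_of_lt Q (Nat.lt_succ_self m)] at hshift
    calc ∏ j ∈ range (m + 1), (1 + x * Q ^ j)
        = (∏ j ∈ range m, (1 + x * Q * Q ^ j)) * (1 + x) := by
          simp only [prod_range_succ', pow_zero, mul_one, pow_succ, mul_assoc, mul_comm Q]
      _ = _ := by
          rw [ih, sum_range_succ' (fun k => qBinom Q (m + 1) k * Q ^ k.choose 2 * x ^ k),
            sum_congr rfl fun k _ => hterm k, sum_add_distrib, ← mul_sum]
          simp only [qBinom_zero_right, Nat.choose_zero_succ, pow_zero, mul_one] at hshift ⊢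
          linear_combination hshift

end Algebra

section Finite

variable {K : Type*} [Field K]

lemma sum_range_four_mul_add_three (N : ℕ) : ∑ m ∈ range N, (4 * m + 3) = 2 * N ^ 2 + N := by
  induction N with
  | zero => simp
  | succ n ih => rw [sum_range_succ, ih]; ring

theorem gauss_identity_finite {q : K} (hq : q ≠ 0) (N : ℕ) :
    ∏ m ∈ range N, ((1 + q ^ (4 * m + 1)) * (1 + q ^ (4 * m + 3))) =
      ∑ k ∈ range (2 * N + 1),
        qBinom (q ^ 4) (2 * N) k * q ^ (2 * ((k : ℤ) - N) ^ 2 - ((k : ℤ) - N)) := by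
  -- Multiplying by `q^(2N²+N)` turns the factors `1 + q^(-(4m+3))` into `1 + q^(4m+3)`.
  set x : K := q ^ (1 - 4 * N : ℤ)
  have hx (i : ℕ) : x * (q ^ 4) ^ i = q ^ (4 * (i : ℤ) + 1 - 4 * N) := by
    rw [← pow_mul, ← zpow_natCast, ← zpow_add₀ hq]; push_cast; ring_nf
  have hshift : q ^ (2 * N ^ 2 + N) = ∏ m ∈ range N, q ^ (4 * m + 3) := by
    rw [prod_pow_eq_pow_sum, sum_range_four_mul_add_three]
  have hlow : q ^ (2 * N ^ 2 + N) * ∏ i ∈ range N, (1 + x * (q ^ 4) ^ i) =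
      ∏ m ∈ range N, (1 + q ^ (4 * m + 3)) := by
    rw [hshift, ← prod_range_reflect (fun i => 1 + x * (q ^ 4) ^ i), ← prod_mul_distrib]
    refine prod_congr rfl fun m hm => ?_
    rw [mem_range] at hm
    rw [hx, mul_add, mul_one, ← zpow_natCast, ← zpow_add₀ hq, add_comm]
    congr 1
    rw [← zpow_zero q, Nat.sub_sub, Nat.cast_sub (by omega)]
    congr 1
    push_cast
    ring
  have hhigh (i : ℕ) : 1 + x * (q ^ 4) ^ (N + i) = 1 + q ^ (4 * i + 1) := by
    rw [hx, ← zpow_natCast]; push_cast; ring_nf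
  have hterm (k : ℕ) : q ^ (2 * N ^ 2 + N) * ((q ^ 4) ^ k.choose 2 * x ^ k) =
      q ^ (2 * ((k : ℤ) - N) ^ 2 - ((k : ℤ) - N)) := by
    have hc : (k.choose 2 : ℤ) * 2 = k * (k - 1) := by
      have h : (k.choose 2 : ℚ) * 2 = k * (k - 1) := by rw [Nat.cast_choose_two]; ring
      exact_mod_cast h
    rw [show x ^ k = q ^ ((1 - 4 * N : ℤ) * k) by rw [zpow_mul, zpow_natCast], ← pow_mul,
      ← zpow_natCast, ← zpow_natCast, ← zpow_add₀ hq, ← zpow_add₀ hq]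
    congr 1
    push_cast
    linear_combination 2 * hc
  have hcauchy := congrArg (q ^ (2 * N ^ 2 + N) * ·)
    (prod_one_add_mul_pow_eq_sum_qBinom (q ^ 4) (2 * N) x)
  simp only [two_mul N, prod_range_add, ← mul_assoc, hlow, hhigh, mul_sum] at hcauchy
  rw [← two_mul] at hcauchy
  rw [prod_mul_distrib, mul_comm, hcauchy]
  refine sum_congr rfl fun k _ => ?_
  rw [← hterm]
  ring

end Finite

section Products

variable {R : Type*} [NormedCommRing R] [NormOneClass R] {q : R}

lemma summable_norm_pow_mul_add (hq : ‖q‖ < 1) {c : ℕ} (hc : 0 < c) (d : ℕ) :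
    Summable fun n => ‖q ^ (c * n + d)‖ := by
  refine (summable_geometric_of_lt_one (norm_nonneg q) hq).of_nonneg_of_le (fun _ => norm_nonneg _)
    fun n => (norm_pow_le _ _).trans (pow_le_pow_of_le_one (norm_nonneg q) hq.le ?_)
  nlinarith

variable [CompleteSpace R]

lemma multipliable_one_add_pow_mul_add (hq : ‖q‖ < 1) {c : ℕ} (hc : 0 < c) (d : ℕ) :
    Multipliable fun n => 1 + q ^ (c * n + d) :=
  multipliable_one_add_of_summable (summable_norm_pow_mul_add hq hc d)

lemma multipliable_one_sub_pow_mul_add (hq : ‖q‖ < 1) {c : ℕ} (hc : 0 < c) (d : ℕ) :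
    Multipliable fun n => 1 - q ^ (c * n + d) := by
  simpa [sub_eq_add_neg] using
    multipliable_one_add_of_summable (f := fun n => -q ^ (c * n + d))
      (by simpa using summable_norm_pow_mul_add hq hc d)

lemma multipliable_one_sub_pow_succ (hq : ‖q‖ < 1) : Multipliable fun n => 1 - q ^ (n + 1) := by
  simpa using multipliable_one_sub_pow_mul_add hq one_pos 1

end Products

lemma tprod_one_sub_pow_succ_le_qPoch {r : ℝ} (h0 : 0 ≤ r) (h1 : r < 1) (n : ℕ) :
    ∏' i, (1 - r ^ (i + 1)) ≤ qPoch r n := by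
  have hfac (i : ℕ) : 0 ≤ 1 - r ^ (i + 1) ∧ 1 - r ^ (i + 1) ≤ 1 :=
    ⟨sub_nonneg.2 (pow_le_one₀ h0 h1.le), sub_le_self _ (pow_nonneg h0 _)⟩
  have hanti : Antitone (qPoch r) := antitone_nat_of_succ_le fun n => by
    rw [qPoch_succ]
    exact mul_le_of_le_one_right (prod_nonneg fun i _ => (hfac i).1) (hfac n).2
  exact hanti.le_of_tendsto
    (multipliable_one_sub_pow_succ (by rwa [Real.norm_of_nonneg h0])).hasProd.tendsto_prod_nat n

section NormedField

variable {K : Type*} [NormedField K] {Q : K}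

lemma one_sub_pow_ne_zero (hQ : ‖Q‖ < 1) {n : ℕ} (hn : n ≠ 0) : 1 - Q ^ n ≠ 0 := by
  rw [sub_ne_zero, ne_comm]
  intro h
  have := pow_lt_one₀ (norm_nonneg Q) hQ hn
  rw [← norm_pow, h, norm_one] at this
  exact lt_irrefl _ this

lemma qPoch_ne_zero (hQ : ‖Q‖ < 1) (n : ℕ) : qPoch Q n ≠ 0 :=
  prod_ne_zero_iff.2 fun i _ => one_sub_pow_ne_zero hQ i.add_one_ne_zero

lemma tprod_one_sub_pow_succ_ne_zero [CompleteSpace K] (hQ : ‖Q‖ < 1) :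
    ∏' n, (1 - Q ^ (n + 1)) ≠ 0 := by
  simpa [sub_eq_add_neg] using tprod_one_add_ne_zero_of_summable (f := fun n => -Q ^ (n + 1))
    (fun n => by simpa [sub_eq_add_neg] using one_sub_pow_ne_zero hQ n.add_one_ne_zero)
    (by simpa using summable_norm_pow_mul_add hQ one_pos 1)

end NormedField

lemma tprod_one_sub_pow_succ_pos {r : ℝ} (h0 : 0 ≤ r) (h1 : r < 1) :
    0 < ∏' i, (1 - r ^ (i + 1)) :=
  (tprod_nonneg fun i => sub_nonneg.2 (pow_le_one₀ h0 h1.le)).lt_of_ne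
    (tprod_one_sub_pow_succ_ne_zero (by rwa [Real.norm_of_nonneg h0])).symm

section Bounds

variable {R : Type*} [NormedCommRing R] [NormOneClass R]

lemma norm_qBinom_le (Q : R) : ∀ m k, ‖qBinom Q m k‖ ≤ qBinom ‖Q‖ m k
  | _, 0 => by simp
  | 0, _ + 1 => by simp
  | m + 1, k + 1 => by
    rw [qBinom_succ_succ, qBinom_succ_succ]
    calc _ ≤ ‖qBinom Q m k‖ + ‖Q‖ ^ (k + 1) * ‖qBinom Q m (k + 1)‖ :=
          (norm_add_le _ _).trans (add_le_add_right ((norm_mul_le _ _).trans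
            (mul_le_mul_of_nonneg_right (norm_pow_le _ _) (norm_nonneg _))) _)
      _ ≤ _ := by gcongr <;> exact norm_qBinom_le Q _ _

lemma qBinom_mul_qPoch_le_one {r : ℝ} (h0 : 0 ≤ r) (h1 : r ≤ 1) :
    ∀ m k, qBinom r m k * qPoch r k ≤ 1
  | _, 0 => by simp
  | 0, _ + 1 => by simp
  | m + 1, k + 1 => by
    have hk := qBinom_mul_qPoch_le_one h0 h1 m k
    have hk1 := qBinom_mul_qPoch_le_one h0 h1 m (k + 1)
    have hp : 0 ≤ r ^ (k + 1) := pow_nonneg h0 _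
    have hp1 : r ^ (k + 1) ≤ 1 := pow_le_one₀ h0 h1
    rw [qPoch_succ] at hk1 ⊢
    rw [qBinom_succ_succ]
    nlinarith [mul_le_mul_of_nonneg_right hk (sub_nonneg.2 hp1), mul_le_mul_of_nonneg_left hk1 hp]

lemma norm_qBinom_le_inv_tprod {Q : R} (hQ : ‖Q‖ < 1) (m k : ℕ) :
    ‖qBinom Q m k‖ ≤ (∏' n, (1 - ‖Q‖ ^ (n + 1)))⁻¹ := by
  have h0 := norm_nonneg Q
  have hpos := tprod_one_sub_pow_succ_pos h0 hQ
  have hle := tprod_one_sub_pow_succ_le_qPoch h0 hQ k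
  calc ‖qBinom Q m k‖ ≤ qBinom ‖Q‖ m k := norm_qBinom_le Q m k
    _ ≤ (qPoch ‖Q‖ k)⁻¹ := by
      rw [← one_div, le_div_iff₀ (hpos.trans_le hle)]
      exact qBinom_mul_qPoch_le_one h0 hQ.le m k
    _ ≤ _ := inv_anti₀ hpos hle

end Bounds

theorem tendsto_qBinom_add {K : Type*} [NormedField K] [CompleteSpace K] {Q : K} (hQ : ‖Q‖ < 1)
    {a b : ℕ → ℕ} (ha : Tendsto a atTop atTop) (hb : Tendsto b atTop atTop) :
    Tendsto (fun N => qBinom Q (a N + b N) (a N)) atTop (𝓝 (∏' n, (1 - Q ^ (n + 1)))⁻¹) := by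
  have hC := tprod_one_sub_pow_succ_ne_zero hQ
  have hP : Tendsto (qPoch Q) atTop (𝓝 (∏' n, (1 - Q ^ (n + 1)))) :=
    (multipliable_one_sub_pow_succ hQ).hasProd.tendsto_prod_nat
  have hlim := (hP.comp (ha.atTop_add_atTop hb)).div ((hP.comp ha).mul (hP.comp hb))
    (mul_ne_zero hC hC)
  rw [div_mul_cancel_left₀ hC] at hlim
  refine hlim.congr fun N => ?_
  have h := qBinom_mul_qPoch_mul_qPoch Q (Nat.le_add_right (a N) (b N))
  rw [Nat.add_sub_cancel_left] at h
  simp only [Pi.div_apply, Function.comp_apply]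
  rw [← h, mul_assoc,
    mul_div_cancel_right₀ _ (mul_ne_zero (qPoch_ne_zero hQ _) (qPoch_ne_zero hQ _))]

lemma tsum_int_eq_sum_range_sub {M : Type*} [AddCommMonoid M] [TopologicalSpace M] {f : ℤ → M}
    (N : ℕ) (hf : ∀ j, N < j.natAbs → f j = 0) :
    ∑' j, f j = ∑ k ∈ range (2 * N + 1), f (k - N) := by
  have hinj : Set.InjOn (fun k : ℕ => (k : ℤ) - N) (range (2 * N + 1)) :=
    fun a _ b _ h => by simpa using h
  rw [← sum_image hinj]
  refine tsum_eq_sum fun j hj => hf j ?_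
  contrapose! hj
  exact mem_image.2 ⟨(j + N).toNat, mem_range.2 (by omega), by simp only [Int.ofNat_toNat]; omega⟩

lemma summable_pow_natAbs {r : ℝ} (h0 : 0 ≤ r) (h1 : r < 1) :
    Summable fun j : ℤ => r ^ j.natAbs :=
  .of_nat_of_neg (by simpa using summable_geometric_of_lt_one h0 h1)
    (by simpa using summable_geometric_of_lt_one h0 h1)

lemma natAbs_le_two_mul_sq_sub (j : ℤ) : (j.natAbs : ℤ) ≤ 2 * j ^ 2 - j := by
  rcases le_or_gt 0 j with h | h
  · rw [Int.natAbs_of_nonneg h]; nlinarith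
  · rw [Int.ofNat_natAbs_of_nonpos h.le]; nlinarith

lemma tendsto_toNat_natCast_add (j : ℤ) : Tendsto (fun N : ℕ => ((N : ℤ) + j).toNat) atTop atTop :=
  tendsto_atTop_atTop.2 fun b => ⟨b + j.natAbs, fun N hN => by omega⟩

section Gauss

variable {K : Type*} [NormedField K] {q : K}

lemma norm_zpow_two_mul_sq_sub_le (hq : ‖q‖ < 1) (hq0 : q ≠ 0) (j : ℤ) :
    ‖q ^ (2 * j ^ 2 - j)‖ ≤ ‖q‖ ^ j.natAbs := by
  rw [norm_zpow, ← zpow_natCast]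
  exact zpow_le_zpow_right_of_le_one₀ (norm_pos_iff.2 hq0) hq.le (natAbs_le_two_mul_sq_sub j)

theorem tsum_zpow_two_mul_sq_sub [CompleteSpace K] (hq : ‖q‖ < 1) (hq0 : q ≠ 0) :
    ∑' j : ℤ, q ^ (2 * j ^ 2 - j) = (∏' n, (1 - (q ^ 4) ^ (n + 1))) *
      ((∏' n, (1 + q ^ (4 * n + 1))) * ∏' n, (1 + q ^ (4 * n + 3))) := by
  have hQ : ‖q ^ 4‖ < 1 := by rw [norm_pow]; exact pow_lt_one₀ (norm_nonneg q) hq four_ne_zero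
  set C := ∏' n, (1 - (q ^ 4) ^ (n + 1))
  let u (N : ℕ) (j : ℤ) : K :=
    if j.natAbs ≤ N then qBinom (q ^ 4) (2 * N) ((N : ℤ) + j).toNat * q ^ (2 * j ^ 2 - j) else 0
  have hfinite (N : ℕ) : ∑' j, u N j =
      ∏ m ∈ range N, ((1 + q ^ (4 * m + 1)) * (1 + q ^ (4 * m + 3))) := by
    rw [tsum_int_eq_sum_range_sub N fun j hj => if_neg (by omega), gauss_identity_finite hq0]
    refine sum_congr rfl fun k hk => ?_
    rw [mem_range] at hk
    simp only [if_pos (show ((k : ℤ) - N).natAbs ≤ N by omega), add_sub_cancel, Int.toNat_natCast]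
  have hpointwise (j : ℤ) : Tendsto (u · j) atTop (𝓝 (C⁻¹ * q ^ (2 * j ^ 2 - j))) := by
    refine ((tendsto_qBinom_add hQ (tendsto_toNat_natCast_add j)
      (tendsto_toNat_natCast_add (-j))).mul_const _).congr' ?_
    filter_upwards [eventually_ge_atTop j.natAbs] with N hN
    simp only [u, if_pos hN]
    congr 2
    omega
  have hbound : ∀ᶠ N in atTop, ∀ j, ‖u N j‖ ≤ (∏' n, (1 - ‖q ^ 4‖ ^ (n + 1)))⁻¹ * ‖q‖ ^ j.natAbs :=
    .of_forall fun N j => by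
      simp only [u]
      split_ifs
      · rw [norm_mul]
        exact mul_le_mul (norm_qBinom_le_inv_tprod hQ _ _) (norm_zpow_two_mul_sq_sub_le hq hq0 j)
          (norm_nonneg _) (inv_nonneg.2 (tprod_one_sub_pow_succ_pos (norm_nonneg _) hQ).le)
      · rw [norm_zero]
        exact mul_nonneg (inv_nonneg.2 (tprod_one_sub_pow_succ_pos (norm_nonneg _) hQ).le)
          (pow_nonneg (norm_nonneg q) _)
  have hsum := tendsto_tsum_of_dominated_convergence
    ((summable_pow_natAbs (norm_nonneg q) hq).mul_left _) hpointwise hbound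
  have hprod := ((multipliable_one_add_pow_mul_add hq four_pos 1).hasProd.mul
    (multipliable_one_add_pow_mul_add hq four_pos 3).hasProd).tendsto_prod_nat
  simp only [hfinite] at hsum
  rw [tendsto_nhds_unique hprod hsum, tsum_mul_left, mul_inv_cancel_left₀
    (tprod_one_sub_pow_succ_ne_zero hQ)]

lemma tprod_one_add_pow_succ [CompleteSpace K] (hq : ‖q‖ < 1) :
    ∏' n, (1 + q ^ (n + 1)) =
      (∏' n, (1 + q ^ (4 * n + 1))) * (∏' n, (1 + q ^ (4 * n + 3))) *
        ∏' n, (1 + q ^ (2 * n + 2)) := by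
  have hodd := tprod_even_mul_odd (f := fun n => 1 + q ^ (2 * n + 1))
  have hall := tprod_even_mul_odd (f := fun n => 1 + q ^ (n + 1))
  simp only [← mul_assoc, mul_add, add_assoc, Nat.reduceMul, Nat.reduceAdd] at hodd hall
  rw [← hall (multipliable_one_add_pow_mul_add hq two_pos 1)
      (multipliable_one_add_pow_mul_add hq two_pos 2),
    ← hodd (multipliable_one_add_pow_mul_add hq four_pos 1)
      (multipliable_one_add_pow_mul_add hq four_pos 3)]

theorem tprod_one_sub_sq_div_one_sub [CompleteSpace K] (hq : ‖q‖ < 1) :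
    ∏' n, (1 - q ^ (2 * (n + 1))) ^ 2 / (1 - q ^ (n + 1)) = (∏' n, (1 - (q ^ 4) ^ (n + 1))) *
      ((∏' n, (1 + q ^ (4 * n + 1))) * ∏' n, (1 + q ^ (4 * n + 3))) := by
  have hfactor (n : ℕ) : (1 - q ^ (2 * (n + 1))) ^ 2 / (1 - q ^ (n + 1)) =
      (1 - q ^ (2 * n + 2)) * (1 + q ^ (n + 1)) := by
    rw [div_eq_iff (one_sub_pow_ne_zero hq n.add_one_ne_zero)]
    ring
  have hfour : ∏' n, (1 - (q ^ 4) ^ (n + 1)) =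
      (∏' n, (1 - q ^ (2 * n + 2))) * ∏' n, (1 + q ^ (2 * n + 2)) := by
    rw [← (multipliable_one_sub_pow_mul_add hq two_pos 2).tprod_mul
      (multipliable_one_add_pow_mul_add hq two_pos 2)]
    congr 1; ext n; ring
  have hsucc : Multipliable fun n => 1 + q ^ (n + 1) := by
    simpa using multipliable_one_add_pow_mul_add hq one_pos 1
  simp only [hfactor]
  rw [(multipliable_one_sub_pow_mul_add hq two_pos 2).tprod_mul hsucc, tprod_one_add_pow_succ hq,
    hfour]
  ring

end Gauss

lemma tsum_zero_zpow_two_mul_sq_sub {K : Type*} [DivisionRing K] [TopologicalSpace K] :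
    ∑' j : ℤ, (0 : K) ^ (2 * j ^ 2 - j) = 1 := by
  refine (tsum_eq_single 0 fun j hj => zero_zpow _ ?_).trans (by simp)
  exact ((show (0 : ℤ) < j.natAbs by omega).trans_le (natAbs_le_two_mul_sq_sub j)).ne'

/-- Gauss's identity: for `|q| < 1`,
`∑_{n∈ℤ} q^{2n²-n} = ∏_{n≥1} (1-q^{2n})²/(1-q^n)`. -/
theorem stmt_9 (q : ℂ) (hq : ‖q‖ < 1) :
    (∑' n : ℤ, q ^ (2 * n ^ 2 - n)) =
      ∏' n : ℕ, (1 - q ^ (2 * (n + 1))) ^ 2 / (1 - q ^ (n + 1)) := by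
  rcases eq_or_ne q 0 with rfl | hq0
  · simp [tsum_zero_zpow_two_mul_sq_sub]
  · rw [tsum_zpow_two_mul_sq_sub hq hq0, tprod_one_sub_sq_div_one_sub hq]
end

section
/- Let l ≥ 2, let {e_1,…,e_l} be the standard orthonormal basis of ℝ^l with inner product (·|·), and let Δ be the root system of type C_l consisting of the short roots ±(e_i−e_j)/√2 and ±(e_i+e_j)/√2 for 1 ≤ i < j ≤ l and the long roots ±√2·e_i for 1 ≤ i ≤ l. Let α_1 = (e_1−e_2)/√2, …, α_{l−1} = (e_{l−1}−e_l)/√2, α_l = √2·e_l be the simple roots; they form a basis of ℝ^l, and every root α has unique integer coordinates α = ∑_{i=1}^l k_i α_i. For k ∈ ℤ let ρ(k) ∈ {0,1} with ρ(k) ≡ k (mod 2), and define p(α) = ∑_{i=1}^{l−1} ρ(k_i) α_i and s(α) = ∑_{i=1}^{l−1} (k_i − ρ(k_i)) α_i. Suppose α is a long root and β is a root such that α + β is also a root. Then (α|β) = −1, p(α+β) = p(β), and s(α+β) = s(α) + s(β). -/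
/-
A long root `α = ±√2 e_i` has integral inner product with every root, while
`2 (α|β) = |α+β|² - |α|² - |β|² ∈ {-1, -2, -3}` because roots have squared length `1` or `2`;
hence `(α|β) = -1`. For the coordinates, the functional `x ↦ x_0 + ⋯ + x_j`, rescaled by `√2`
(or by `1/√2` when `j = l-1`), extracts the `j`-th simple-root coordinate. Coordinates are
therefore additive, and those of `α` at the short simple roots are `0` or `±2`. Adding an
even vector changes neither the parities nor the additivity of the even parts.
-/

open scoped BigOperators RealInnerProductSpace

/-- The standard orthonormal basis vector `e_i` of `ℝ^l`. -/
noncomputable def Ce (l : ℕ) (i : Fin l) : EuclideanSpace ℝ (Fin l) :=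
  EuclideanSpace.single i 1

/-- The short roots `±(e_i - e_j)/√2`, `±(e_i + e_j)/√2` for `i < j`, of type `C_l`. -/
noncomputable def CshortRoots (l : ℕ) : Set (EuclideanSpace ℝ (Fin l)) :=
  {x | ∃ i j : Fin l, i < j ∧
    (x = (Real.sqrt 2)⁻¹ • (Ce l i - Ce l j) ∨ x = -((Real.sqrt 2)⁻¹ • (Ce l i - Ce l j)) ∨
     x = (Real.sqrt 2)⁻¹ • (Ce l i + Ce l j) ∨ x = -((Real.sqrt 2)⁻¹ • (Ce l i + Ce l j)))}

/-- The long roots `±√2·e_i` of type `C_l`. -/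
noncomputable def ClongRoots (l : ℕ) : Set (EuclideanSpace ℝ (Fin l)) :=
  {x | ∃ i : Fin l, x = Real.sqrt 2 • Ce l i ∨ x = -(Real.sqrt 2 • Ce l i)}

/-- The root system of type `C_l`. -/
noncomputable def Croots (l : ℕ) : Set (EuclideanSpace ℝ (Fin l)) :=
  CshortRoots l ∪ ClongRoots l

/-- The simple roots: `α_i = (e_i - e_{i+1})/√2` for `i < l-1`, and `α_l = √2·e_l`. -/
noncomputable def Csimple (l : ℕ) (i : Fin l) : EuclideanSpace ℝ (Fin l) :=
  if h : (i : ℕ) + 1 < l then (Real.sqrt 2)⁻¹ • (Ce l i - Ce l ⟨(i : ℕ) + 1, h⟩)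
  else Real.sqrt 2 • Ce l i

/-- `Ccoords l α k` says `k` is the coordinate vector of `α` in the simple root basis:
`α = ∑ k_i • α_i`. -/
noncomputable def Ccoords (l : ℕ) (α : EuclideanSpace ℝ (Fin l)) (k : Fin l → ℤ) : Prop :=
  α = ∑ i : Fin l, (k i : ℝ) • Csimple l i

/-- `p(α) = ∑_{i=1}^{l-1} ρ(k_i)·α_i`, computed from the coordinate vector `k` of `α`;
here `ρ(k) = k % 2 ∈ {0,1}` with `ρ(k) ≡ k (mod 2)`. -/
noncomputable def Cp (l : ℕ) (k : Fin l → ℤ) : EuclideanSpace ℝ (Fin l) :=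
  ∑ i : Fin l, (if (i : ℕ) + 1 < l then ((k i % 2 : ℤ) : ℝ) else 0) • Csimple l i

/-- `s(α) = ∑_{i=1}^{l-1} (k_i - ρ(k_i))·α_i`, computed from the coordinate vector `k`. -/
noncomputable def Cs (l : ℕ) (k : Fin l → ℤ) : EuclideanSpace ℝ (Fin l) :=
  ∑ i : Fin l, (if (i : ℕ) + 1 < l then ((k i - k i % 2 : ℤ) : ℝ) else 0) • Csimple l i

open Finset

lemma inner_Ce_left (l : ℕ) (i : Fin l) (x : EuclideanSpace ℝ (Fin l)) : ⟪Ce l i, x⟫ = x i := by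
  simp [Ce, EuclideanSpace.inner_single_left]

lemma Ce_apply (l : ℕ) (i m : Fin l) : Ce l i m = if m = i then 1 else 0 := by
  simp [Ce, PiLp.single_apply]

lemma inner_self_of_mem_CshortRoots {l : ℕ} {x : EuclideanSpace ℝ (Fin l)}
    (hx : x ∈ CshortRoots l) : ⟪x, x⟫ = 1 := by
  obtain ⟨i, j, hij, rfl | rfl | rfl | rfl⟩ := hx <;>
  · simp only [inner_neg_left, inner_neg_right, real_inner_smul_left, real_inner_smul_right,
      inner_sub_left, inner_add_left, inner_Ce_left, PiLp.sub_apply, PiLp.add_apply, Ce_apply,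
      ↓reduceIte, if_neg hij.ne, if_neg hij.ne']
    have : (Real.sqrt 2)⁻¹ * (Real.sqrt 2)⁻¹ = 2⁻¹ := by
      rw [← mul_inv, Real.mul_self_sqrt zero_le_two]
    linear_combination 2 * this

lemma inner_self_of_mem_ClongRoots {l : ℕ} {x : EuclideanSpace ℝ (Fin l)}
    (hx : x ∈ ClongRoots l) : ⟪x, x⟫ = 2 := by
  obtain ⟨i, rfl | rfl⟩ := hx <;>
  · simp only [inner_neg_left, inner_neg_right, real_inner_smul_left, real_inner_smul_right,
      inner_Ce_left, Ce_apply, ↓reduceIte]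
    norm_num

lemma inner_self_of_mem_Croots {l : ℕ} {x : EuclideanSpace ℝ (Fin l)} (hx : x ∈ Croots l) :
    ⟪x, x⟫ = 1 ∨ ⟪x, x⟫ = 2 :=
  hx.imp inner_self_of_mem_CshortRoots inner_self_of_mem_ClongRoots

lemma exists_int_sqrt_two_mul_apply_of_mem_Croots {l : ℕ} {x : EuclideanSpace ℝ (Fin l)}
    (hx : x ∈ Croots l) (m : Fin l) : ∃ n : ℤ, Real.sqrt 2 * x m = n := by
  have h2 : Real.sqrt 2 ≠ 0 := by positivity
  rcases hx with ⟨i, j, -, rfl | rfl | rfl | rfl⟩ | ⟨i, rfl | rfl⟩ <;>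
  · simp only [PiLp.neg_apply, PiLp.smul_apply, PiLp.sub_apply, PiLp.add_apply, smul_eq_mul,
      Ce_apply, mul_neg, mul_inv_cancel_left₀ h2, ← mul_assoc, Real.mul_self_sqrt zero_le_two]
    split_ifs <;> exact ⟨_, by norm_cast⟩

lemma exists_int_inner_of_mem_ClongRoots {l : ℕ} {α β : EuclideanSpace ℝ (Fin l)}
    (hα : α ∈ ClongRoots l) (hβ : β ∈ Croots l) : ∃ n : ℤ, ⟪α, β⟫ = n := by
  obtain ⟨i, rfl | rfl⟩ := hα <;>
    obtain ⟨n, hn⟩ := exists_int_sqrt_two_mul_apply_of_mem_Croots hβ i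
  · exact ⟨n, by rw [real_inner_smul_left, inner_Ce_left, hn]⟩
  · exact ⟨-n, by rw [inner_neg_left, real_inner_smul_left, inner_Ce_left, hn, Int.cast_neg]⟩

lemma inner_eq_neg_one_of_integral {E : Type*} [NormedAddCommGroup E] [InnerProductSpace ℝ E]
    {a b : E} (ha : ⟪a, a⟫ = 2) (hb : ⟪b, b⟫ = 1 ∨ ⟪b, b⟫ = 2)
    (hab : ⟪a + b, a + b⟫ = 1 ∨ ⟪a + b, a + b⟫ = 2) (hint : ∃ n : ℤ, ⟪a, b⟫ = n) :
    ⟪a, b⟫ = -1 := by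
  obtain ⟨n, hn⟩ := hint
  have hexp := real_inner_add_add_self a b
  have hbounds : (2 * n : ℝ) ≤ -1 ∧ (-3 : ℝ) ≤ 2 * n := by
    rcases hb with hb | hb <;> rcases hab with hab | hab <;> constructor <;> linarith
  have : n = -1 := by
    have h1 : 2 * n ≤ -1 := by exact_mod_cast hbounds.1
    have h2 : -3 ≤ 2 * n := by exact_mod_cast hbounds.2
    omega
  rw [hn, this, Int.cast_neg, Int.cast_one]

noncomputable def partialSum (l : ℕ) (j : Fin l) : EuclideanSpace ℝ (Fin l) →ₗ[ℝ] ℝ :=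
  ∑ m ∈ Iic j, (EuclideanSpace.proj m : EuclideanSpace ℝ (Fin l) →L[ℝ] ℝ).toLinearMap

lemma partialSum_Ce (l : ℕ) (j i : Fin l) :
    partialSum l j (Ce l i) = if i ≤ j then 1 else 0 := by
  simp [partialSum, Ce_apply]

noncomputable def simpleCoord (l : ℕ) (j : Fin l) : EuclideanSpace ℝ (Fin l) →ₗ[ℝ] ℝ :=
  (if (j : ℕ) + 1 < l then Real.sqrt 2 else (Real.sqrt 2)⁻¹) • partialSum l j

lemma simpleCoord_Csimple (l : ℕ) (j i : Fin l) :
    simpleCoord l j (Csimple l i) = if i = j then 1 else 0 := by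
  have h2 : Real.sqrt 2 ≠ 0 := by positivity
  unfold Csimple simpleCoord
  by_cases hi : (i : ℕ) + 1 < l
  · have hsum : partialSum l j (Ce l i - Ce l ⟨i + 1, hi⟩) = if i = j then 1 else 0 := by
      simp only [map_sub, partialSum_Ce, Fin.le_def, Fin.ext_iff]
      split_ifs <;> first | omega | norm_num
    rw [dif_pos hi, LinearMap.smul_apply, map_smul, hsum]
    rcases eq_or_ne i j with rfl | hij
    · simp [hi, h2]
    · simp [hij]
  · have hsum : partialSum l j (Ce l i) = if i = j then 1 else 0 := by
      simp only [partialSum_Ce, Fin.le_def, Fin.ext_iff]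
      split_ifs <;> first | rfl | omega
    rw [dif_neg hi, LinearMap.smul_apply, map_smul, hsum]
    rcases eq_or_ne i j with rfl | hij
    · simp [hi, h2]
    · simp [hij]

lemma simpleCoord_eq_of_Ccoords {l : ℕ} {α : EuclideanSpace ℝ (Fin l)} {k : Fin l → ℤ}
    (hk : Ccoords l α k) (j : Fin l) : simpleCoord l j α = k j := by
  rw [hk, map_sum]
  simp [simpleCoord_Csimple]

lemma Ccoords_add_eq {l : ℕ} {α β : EuclideanSpace ℝ (Fin l)} {ka kb kc : Fin l → ℤ}
    (hka : Ccoords l α ka) (hkb : Ccoords l β kb) (hkc : Ccoords l (α + β) kc) :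
    kc = ka + kb := by
  funext j
  have h := simpleCoord_eq_of_Ccoords hkc j
  rw [map_add, simpleCoord_eq_of_Ccoords hka, simpleCoord_eq_of_Ccoords hkb] at h
  exact_mod_cast h.symm

lemma two_dvd_of_Ccoords_of_mem_ClongRoots {l : ℕ} {α : EuclideanSpace ℝ (Fin l)}
    {k : Fin l → ℤ} (hα : α ∈ ClongRoots l) (hk : Ccoords l α k) {j : Fin l}
    (hj : (j : ℕ) + 1 < l) : 2 ∣ k j := by
  have h := simpleCoord_eq_of_Ccoords hk j
  obtain ⟨i, rfl | rfl⟩ := hα <;>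
  · simp only [simpleCoord, if_pos hj, LinearMap.smul_apply, map_neg, map_smul, partialSum_Ce,
      smul_eq_mul, ← mul_assoc, Real.mul_self_sqrt zero_le_two] at h
    split_ifs at h <;> norm_num at h <;> norm_cast at h <;> omega

lemma Cp_add_of_two_dvd {l : ℕ} {ka kb : Fin l → ℤ}
    (hka : ∀ i : Fin l, (i : ℕ) + 1 < l → 2 ∣ ka i) : Cp l (ka + kb) = Cp l kb := by
  refine sum_congr rfl fun i _ => ?_
  split_ifs with hi
  · have := hka i hi
    rw [Pi.add_apply, show (ka i + kb i) % 2 = kb i % 2 by omega]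
  · rfl

lemma Cs_add_of_two_dvd {l : ℕ} {ka kb : Fin l → ℤ}
    (hka : ∀ i : Fin l, (i : ℕ) + 1 < l → 2 ∣ ka i) :
    Cs l (ka + kb) = Cs l ka + Cs l kb := by
  rw [Cs, Cs, Cs, ← sum_add_distrib]
  refine sum_congr rfl fun i _ => ?_
  rw [← add_smul]
  split_ifs with hi
  · have := hka i hi
    rw [Pi.add_apply, ← Int.cast_add, show ka i + kb i - (ka i + kb i) % 2 =
      ka i - ka i % 2 + (kb i - kb i % 2) by omega]
  · rw [add_zero]

theorem stmt_16_general (l : ℕ) (α β : EuclideanSpace ℝ (Fin l))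
    (hα : α ∈ ClongRoots l) (hβ : β ∈ Croots l) (hαβ : α + β ∈ Croots l)
    (ka kb kc : Fin l → ℤ)
    (hka : Ccoords l α ka) (hkb : Ccoords l β kb) (hkc : Ccoords l (α + β) kc) :
    (inner ℝ α β : ℝ) = -1 ∧ Cp l kc = Cp l kb ∧ Cs l kc = Cs l ka + Cs l kb := by
  have heven : ∀ i : Fin l, (i : ℕ) + 1 < l → 2 ∣ ka i := fun i hi =>
    two_dvd_of_Ccoords_of_mem_ClongRoots hα hka hi
  rw [Ccoords_add_eq hka hkb hkc]
  exact ⟨inner_eq_neg_one_of_integral (inner_self_of_mem_ClongRoots hα)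
      (inner_self_of_mem_Croots hβ) (inner_self_of_mem_Croots hαβ)
      (exists_int_inner_of_mem_ClongRoots hα hβ),
    Cp_add_of_two_dvd heven, Cs_add_of_two_dvd heven⟩

/-- If `α` is a long root of `C_l` and `β` a root such that `α + β` is a root, then
`(α|β) = -1`, `p(α+β) = p(β)` and `s(α+β) = s(α) + s(β)`. -/
theorem stmt_16 (l : ℕ) (hl : 2 ≤ l) (α β : EuclideanSpace ℝ (Fin l))
    (hα : α ∈ ClongRoots l) (hβ : β ∈ Croots l) (hαβ : α + β ∈ Croots l)
    (ka kb kc : Fin l → ℤ)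
    (hka : Ccoords l α ka) (hkb : Ccoords l β kb) (hkc : Ccoords l (α + β) kc) :
    (inner ℝ α β : ℝ) = -1 ∧ Cp l kc = Cp l kb ∧ Cs l kc = Cs l ka + Cs l kb :=
  stmt_16_general l α β hα hβ hαβ ka kb kc hka hkb hkc
end
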